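/- arXiv:0812.4114 — 3 statements merged into one kernel-verified Lean document; each statement's English description precedes it below -/
import Mathlib

section
/- For the simple majority game on n = 2m+1 voters, the (non-normalized) Banzhaf index β(n) = C(2m,m)/2^{2m} satisfies β(n) · √n → √(2/π) as m → ∞; in particular β(n) is asymptotically proportional to 1/√n (Penrose's square root law). -/
/-!
The Stirling sequence `s n = n! / (√(2n) (n/e)^n)` tends to `√π`, and the quotient
`s (2n) / s n ^ 2` is exactly `C(2n, n) √n / 4^n`; hence `C(2n, n) / 4^n ~ 1 / √(π n)`.
Multiplying by `√(2n + 1) ~ √2 · √n` gives the limit `√2 / √π`.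
-/

open Filter Real Topology Nat Stirling

theorem Stirling.stirlingSeq_two_mul_div_sq (n : ℕ) :
    stirlingSeq (2 * n) / stirlingSeq n ^ 2 = centralBinom n * √n / 4 ^ n := by
  rcases eq_or_ne n 0 with rfl | hn
  · simp
  have hfac : ((2 * n)! : ℝ) = centralBinom n * (n ! : ℝ) ^ 2 := by
    have h := choose_mul_factorial_mul_factorial (le_mul_of_one_le_left' one_le_two : n ≤ 2 * n)
    rw [two_mul, Nat.add_sub_cancel, ← two_mul] at h
    rw [centralBinom, ← h]; push_cast; ring
  have hsqrt : √(2 * (2 * n : ℕ) : ℝ) = 2 * √n := by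
    push_cast
    rw [show (2 : ℝ) * (2 * n) = 2 ^ 2 * n by ring, sqrt_mul (by norm_num), sqrt_sq (by norm_num)]
  simp only [stirlingSeq, hfac, hsqrt]
  push_cast
  field_simp
  rw [sq_sqrt (by positivity), sq_sqrt (by positivity),
    show (4 : ℝ) ^ n = 2 ^ (2 * n) by rw [pow_mul]; norm_num]
  ring

theorem tendsto_centralBinom_mul_sqrt_div_four_pow :
    Tendsto (fun n : ℕ => centralBinom n * √n / 4 ^ n) atTop (𝓝 (√π)⁻¹) := by
  have hpi : √π ≠ 0 := (sqrt_pos.2 pi_pos).ne'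
  have h := (tendsto_stirlingSeq_sqrt_pi.comp (tendsto_id.const_mul_atTop' two_pos)).div
    (tendsto_stirlingSeq_sqrt_pi.pow 2) (pow_ne_zero 2 hpi)
  rw [sq, div_mul_cancel_left₀ hpi] at h
  exact h.congr stirlingSeq_two_mul_div_sq

theorem tendsto_sqrt_two_mul_add_one_div :
    Tendsto (fun n : ℕ => √((2 * n + 1) / n)) atTop (𝓝 √2) := by
  have h : Tendsto (fun n : ℕ => 2 + 1 / (n : ℝ)) atTop (𝓝 2) := by
    simpa using tendsto_one_div_atTop_nhds_zero_nat.const_add (2 : ℝ)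
  refine (continuous_sqrt.tendsto 2).comp (h.congr' ?_)
  filter_upwards [eventually_ne_atTop 0] with n hn
  field_simp

/-- Penrose's square root law: the Banzhaf decisiveness probability
`β(2m+1) = C(2m,m)/2^(2m)` of a voter in a simple-majority game on `n = 2m+1`
voters satisfies `β(n) · √n → √(2/π)` as `m → ∞`. -/
theorem penrose_square_root_law :
    Tendsto
      (fun m : ℕ =>
        ((Nat.choose (2 * m) m : ℝ) / 2 ^ (2 * m)) * Real.sqrt (2 * m + 1))
      atTop (nhds (Real.sqrt (2 / Real.pi))) := by
  have h := tendsto_centralBinom_mul_sqrt_div_four_pow.mul tendsto_sqrt_two_mul_add_one_div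
  rw [inv_mul_eq_div, ← sqrt_div' _ pi_pos.le] at h
  refine h.congr' ?_
  filter_upwards [eventually_ne_atTop 0] with m hm
  have hm' : (0 : ℝ) < m := by positivity
  rw [centralBinom, pow_mul, sqrt_div' _ hm'.le]
  field_simp
  norm_num
end

section
/- In a weighted voting game, if w_i ≥ w_j then TB_i ≥ TB_j; i.e., the Banzhaf index is monotone in the voting weight. -/
/-! Relabelling coalitions by the transposition `(i j)` injects the coalitions that `j` swings
into those that `i` swings. For `j ∉ S`, replacing `i` by `j` in `S` does not increase its weight,
so the image still loses; and adding `i` to the image weighs at least as much as adding `j` to `S`,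
so it still wins. -/

open Finset

/-- Total Banzhaf count of voter `i` in the weighted voting game with weights `w`
and quota `q`. -/
noncomputable def TBw {n : ℕ} (w : Fin n → ℝ) (q : ℝ) (i : Fin n) : ℕ :=
  (((univ.erase i).powerset).filter
    (fun S => ∑ j ∈ S, w j < q ∧ q ≤ w i + ∑ j ∈ S, w j)).card

section SwapVoters

variable {ι M : Type*} [DecidableEq ι] {s : Finset ι} {i j : ι}

lemma notMem_map_swap_of_notMem (hj : j ∉ s) : i ∉ s.map (Equiv.swap i j).toEmbedding := by
  simpa [Equiv.swap_apply_eq_iff] using hj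

lemma map_swap_eq_self (hi : i ∉ s) (hj : j ∉ s) : s.map (Equiv.swap i j).toEmbedding = s := by
  ext k
  rw [mem_map_equiv, Equiv.symm_swap, Equiv.swap_apply_def]
  split_ifs <;> simp_all

variable [AddCommMonoid M] [PartialOrder M] [IsOrderedAddMonoid M] {w : ι → M}

lemma sum_map_swap_le (hj : j ∉ s) (hij : w j ≤ w i) :
    ∑ k ∈ s.map (Equiv.swap i j).toEmbedding, w k ≤ ∑ k ∈ s, w k := by
  rw [sum_map]
  refine sum_le_sum fun k hk => ?_
  rcases eq_or_ne k i with rfl | hki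
  · simpa using hij
  · rw [Equiv.toEmbedding_apply, Equiv.swap_apply_of_ne_of_ne hki (ne_of_mem_of_not_mem hk hj)]

lemma add_sum_le_add_sum_map_swap (hj : j ∉ s) (hij : w j ≤ w i) :
    w j + ∑ k ∈ s, w k ≤ w i + ∑ k ∈ s.map (Equiv.swap i j).toEmbedding, w k := by
  by_cases hi : i ∈ s
  · obtain ⟨t, hit, rfl⟩ : ∃ t, i ∉ t ∧ insert i t = s :=
      ⟨s.erase i, notMem_erase i s, insert_erase hi⟩
    have hjt : j ∉ t := fun h => hj (mem_insert_of_mem h)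
    rw [map_insert, map_swap_eq_self hit hjt, Equiv.toEmbedding_apply, Equiv.swap_apply_left,
      sum_insert hit, sum_insert hjt, add_left_comm]
  · rw [map_swap_eq_self hi hj]
    exact add_le_add_left hij _

end SwapVoters

theorem banzhaf_monotone_in_weight_general {n : ℕ} (w : Fin n → ℝ) (q : ℝ)
    (i j : Fin n) (hij : w j ≤ w i) :
    TBw w q j ≤ TBw w q i := by
  refine card_le_card_of_injOn (·.map (Equiv.swap i j).toEmbedding) (fun S hS => ?_)
    (map_injective _).injOn
  simp only [coe_filter, mem_powerset, subset_erase, Set.mem_ofPred_eq] at hS ⊢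
  obtain ⟨⟨-, hj⟩, hlose, hwin⟩ := hS
  exact ⟨⟨subset_univ _, notMem_map_swap_of_notMem hj⟩,
    (sum_map_swap_le hj hij).trans_lt hlose, hwin.trans (add_sum_le_add_sum_map_swap hj hij)⟩

/-- The Banzhaf count is monotone in the voting weight: a voter with larger
weight has at least as large a total Banzhaf count. -/
theorem banzhaf_monotone_in_weight {n : ℕ} (w : Fin n → ℝ) (q : ℝ)
    (hw : ∀ k, 0 ≤ w k) (i j : Fin n) (hij : w j ≤ w i) :
    TBw w q j ≤ TBw w q i :=
  banzhaf_monotone_in_weight_general w q i j hij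
end

section
/- Adding a dummy voter does not change the other voters' total Banzhaf counts: if voter d is never decisive and for every S not containing d, S ∈ W iff S ∪ {d} ∈ W, then for every other voter i the total Banzhaf count of i in the game restricted to V\{d} equals half the total Banzhaf count of i in the full game, so the normalized Banzhaf indices of the non-dummy voters are unchanged. -/
open Finset

/-- Total Banzhaf count of voter `i` in the simple voting game with winning family `W`. -/
def TB {n : ℕ} (W : Finset (Fin n) → Prop) [DecidablePred W] (i : Fin n) : ℕ :=
  (((univ.erase i).powerset).filter (fun S => ¬ W S ∧ W (insert i S))).card

/-- Total Banzhaf count of voter `i` in the game restricted to `V \ {d}`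
(winning family `W' = {S ⊆ V\{d} : S ∈ W}`). -/
def TBres {n : ℕ} (W : Finset (Fin n) → Prop) [DecidablePred W] (d i : Fin n) : ℕ :=
  ((((univ.erase d).erase i).powerset).filter (fun S => ¬ W S ∧ W (insert i S))).card

lemma key_half {n : ℕ} (W : Finset (Fin n) → Prop) [DecidablePred W] (d : Fin n)
    (hd : ∀ S : Finset (Fin n), d ∉ S → (W S ↔ W (insert d S)))
    (i : Fin n) (hi : i ≠ d) : 2 * TBres W d i = TB W i := by
  classical
  unfold TB TBres
  set Q : Finset (Fin n) → Prop := fun S => ¬ W S ∧ W (insert i S) with hQ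
  have hPd : ∀ S : Finset (Fin n), d ∉ S → (Q S ↔ Q (insert d S)) := by
    intro S hdS
    have hdi : d ∉ insert i S := by
      simp only [mem_insert]
      rintro (h | h)
      · exact hi h.symm
      · exact hdS h
    simp only [hQ]
    rw [Finset.insert_comm, ← hd S hdS, ← hd (insert i S) hdi]
  set A := (((univ.erase d).erase i).powerset).filter Q with hA
  set B := ((univ.erase i).powerset).filter Q with hB
  have hsplit : B = A ∪ A.image (insert d) := by
    ext S
    simp only [hA, hB, mem_union, mem_filter, mem_powerset, mem_image,
      Finset.subset_erase, Finset.subset_univ, true_and]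
    constructor
    · rintro ⟨hiS, hQS⟩
      by_cases hdS : d ∈ S
      · right
        refine ⟨S.erase d, ⟨⟨⟨Finset.notMem_erase _ _, ?_⟩, ?_⟩, ?_⟩⟩
        · intro h; exact hiS (Finset.mem_of_mem_erase h)
        · have hd' : d ∉ S.erase d := Finset.notMem_erase _ _
          rw [hPd _ hd', Finset.insert_erase hdS] at *
          exact hQS
        · exact Finset.insert_erase hdS
      · left; exact ⟨⟨hdS, hiS⟩, hQS⟩
    · rintro (⟨⟨hdS, hiS⟩, hQS⟩ | ⟨T, ⟨⟨⟨hdT, hiT⟩, hQT⟩, rfl⟩⟩)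
      · exact ⟨hiS, hQS⟩
      · refine ⟨?_, (hPd T hdT).mp hQT⟩
        simp only [mem_insert]
        rintro (h | h)
        · first | exact hi h.symm | exact hi h
        · exact hiT h
  have hdisj : Disjoint A (A.image (insert d)) := by
    rw [Finset.disjoint_left]
    intro S hSA hSim
    simp only [hA, mem_filter, mem_powerset, Finset.subset_erase] at hSA
    simp only [mem_image] at hSim
    obtain ⟨T, _, rfl⟩ := hSim
    have hdS : d ∉ insert d T := by tauto
    exact hdS (mem_insert_self d T)
  have hinj : Set.InjOn (insert d) (A : Set (Finset (Fin n))) := by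
    intro S hS T hT h
    simp only [hA, coe_filter, Set.mem_setOf_eq, mem_powerset, Finset.subset_erase] at hS hT
    have hdS : d ∉ S := by tauto
    have hdT : d ∉ T := by tauto
    have := congrArg (Finset.erase · d) h
    simpa [Finset.erase_insert hdS, Finset.erase_insert hdT] using this
  rw [hsplit, Finset.card_union_of_disjoint hdisj, Finset.card_image_of_injOn hinj]
  ring

/-- Removing a dummy voter `d` halves each remaining voter's total Banzhaf count
and leaves the normalized Banzhaf indices of the other voters unchanged. -/
theorem dummy_removal {n : ℕ} (W : Finset (Fin n) → Prop) [DecidablePred W]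
    (hmono : ∀ S T : Finset (Fin n), S ⊆ T → W S → W T) (d : Fin n)
    (hd : ∀ S : Finset (Fin n), d ∉ S → (W S ↔ W (insert d S))) :
    ∀ i : Fin n, i ≠ d →
      2 * TBres W d i = TB W i ∧
      (TBres W d i : ℝ) / (∑ j ∈ univ.erase d, (TBres W d j : ℝ)) =
        (TB W i : ℝ) / (∑ j : Fin n, (TB W j : ℝ)) := by
  classical
  intro i hi
  have hkey := key_half W d hd i hi
  refine ⟨hkey, ?_⟩
  have hTBd : TB W d = 0 := by
    unfold TB
    rw [Finset.card_eq_zero, Finset.filter_eq_empty_iff]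
    intro S hS
    rw [mem_powerset, Finset.subset_erase] at hS
    rintro ⟨h1, h2⟩
    exact h1 ((hd S hS.2).mpr h2)
  have hsum : (∑ j : Fin n, (TB W j : ℝ)) = 2 * ∑ j ∈ univ.erase d, (TBres W d j : ℝ) := by
    rw [← Finset.add_sum_erase _ _ (mem_univ d), hTBd, Nat.cast_zero, zero_add,
      Finset.mul_sum]
    refine Finset.sum_congr rfl ?_
    intro j hj
    rw [← key_half W d hd j (Finset.ne_of_mem_erase hj)]
    push_cast
    ring
  rw [hsum, ← hkey]
  push_cast
  rw [mul_div_mul_left _ _ (by norm_num : (2:ℝ) ≠ 0)]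
end
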